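/- For every λ ∈ [0, 1/2], every ν ≥ 1/2 − λ and every x > 0, I_{ν−1}(x)/I_ν(x) > (ν − 1/2 − λ + √(β² + x²))/x, where β = √(2λ) + √(ν² − (λ − 1/2)²). -/

import Mathlib

/-!
Put `t = x²/4`, so that `I_ν(x) = (x/2)^ν F_ν(t)` with `F_ν(t) = ∑ tᵏ / (k! Γ(k+ν+1))`; then
`F_ν' = F_{ν+1}` and `F_{ν-1} = ν F_ν + t F_{ν+1}`. The claim becomes `F_{ν-1} > φ F_ν` with
`φ = (a + s)/2`, `a = ν - 1/2 - λ`, `s = √(β² + 4t)`. With `q = √(2λ)` the parameters satisfy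
`a (2ν - a) = β² - 2qβ` and `2 (ν - a) - 1 = q²`, and these relations are exactly what makes the gap
`G = F_{ν-1} - φ F_ν` solve `G' + (φ/t) G = F_ν (q s - β)² / (4 t s) ≥ 0`. Multiplying by
`E = t^((a+β)/2) e^s (s+β)^(-β)`, whose logarithmic derivative is `φ/t`, makes `G E` nondecreasing.
Finally `G(0) = (2ν - a - β) / (2 Γ(ν+1))` and `2ν - a - β = (ν - γ) + (1 - q)²/2` with
`γ = √(ν² - (λ - 1/2)²) ≤ ν`: for `λ < 1/2` this is positive, so `G E > 0` near `0`; for `λ = 1/2`,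
`q = 1` and `s > β` make `G E` strictly increasing from `G(0) E(0) ≥ 0`.
-/

open Real Filter Set Topology
open scoped Nat

/-- The modified Bessel function of the first kind,
`I_ν(x) = ∑_{k=0}^∞ (x/2)^{2k+ν} / (k! Γ(k+ν+1))`
(here `1/Γ` vanishes at nonpositive integer arguments, since `Real.Gamma` is `0` there). -/
noncomputable def besselI (ν x : ℝ) : ℝ :=
  ∑' k : ℕ, (x / 2) ^ (2 * (k : ℝ) + ν) / ((Nat.factorial k : ℝ) * Real.Gamma ((k : ℝ) + ν + 1))

namespace Real

lemma one_le_Gamma_of_two_le {s : ℝ} (hs : 2 ≤ s) : 1 ≤ Gamma s := by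
  simpa [Gamma_two] using Gamma_strictMonoOn_Ici.monotoneOn self_mem_Ici hs hs

/-- At `s = 0` both sides vanish, as `Gamma 0 = 0` in Mathlib (the convention `1 / Γ(0) = 0`). -/
lemma inv_Gamma_eq_div_Gamma_add_one (s : ℝ) : (Gamma s)⁻¹ = s / Gamma (s + 1) := by
  rcases eq_or_ne s 0 with rfl | hs
  · simp [Gamma_zero]
  · rw [Gamma_add_one hs, div_mul_cancel_left₀ hs]

end Real

noncomputable def besselFTerm (μ t : ℝ) (k : ℕ) : ℝ :=
  t ^ k / (k ! * Gamma (k + μ + 1))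

noncomputable def besselF (μ t : ℝ) : ℝ :=
  ∑' k, besselFTerm μ t k

section Series

variable {μ t : ℝ}

lemma besselFTerm_index_zero (μ t : ℝ) : besselFTerm μ t 0 = (Gamma (μ + 1))⁻¹ := by
  simp [besselFTerm]

lemma factorial_mul_Gamma_add_nonneg (hμ : -1 ≤ μ) (k : ℕ) :
    0 ≤ (k ! : ℝ) * Gamma (k + μ + 1) :=
  mul_nonneg (by positivity)
    (Gamma_nonneg_of_nonneg (by linarith [(Nat.cast_nonneg k : (0 : ℝ) ≤ k)]))

lemma besselFTerm_nonneg (hμ : -1 ≤ μ) (ht : 0 ≤ t) (k : ℕ) : 0 ≤ besselFTerm μ t k :=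
  div_nonneg (pow_nonneg ht k) (factorial_mul_Gamma_add_nonneg hμ k)

lemma abs_besselFTerm_le (hμ : -1 ≤ μ) {y R : ℝ} (hy : |y| ≤ R) (k : ℕ) :
    |besselFTerm μ y k| ≤ besselFTerm μ R k := by
  have hD := factorial_mul_Gamma_add_nonneg hμ k
  rw [besselFTerm, besselFTerm, abs_div, abs_pow, abs_of_nonneg hD]
  exact div_le_div_of_nonneg_right (pow_le_pow_left₀ (abs_nonneg y) hy k) hD

lemma summable_besselFTerm (hμ : -1 ≤ μ) (t : ℝ) : Summable (besselFTerm μ t) := by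
  refine (summable_pow_div_factorial |t|).of_norm_bounded_eventually_nat ?_
  filter_upwards [eventually_ge_atTop 2] with k hk
  have hk₂ : (2 : ℝ) ≤ k := by exact_mod_cast hk
  have hΓ : 1 ≤ Gamma (k + μ + 1) := one_le_Gamma_of_two_le (by linarith)
  have hk! : (0 : ℝ) < k ! := by positivity
  rw [norm_eq_abs, besselFTerm, abs_div, abs_pow, abs_of_pos (mul_pos hk! (by linarith))]
  exact div_le_div_of_nonneg_left (by positivity) hk! (le_mul_of_one_le_right hk!.le hΓ)

lemma hasSum_besselF (hμ : -1 ≤ μ) (t : ℝ) : HasSum (besselFTerm μ t) (besselF μ t) :=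
  (summable_besselFTerm hμ t).hasSum

lemma succ_mul_besselFTerm_succ (μ t : ℝ) (k : ℕ) :
    (k + 1 : ℝ) * besselFTerm μ t (k + 1) = t * besselFTerm (μ + 1) t k := by
  have hk : (k + 1 : ℝ) ≠ 0 := by positivity
  rw [besselFTerm, besselFTerm, Nat.factorial_succ]
  push_cast
  rw [show (k + 1 : ℝ) + μ + 1 = k + (μ + 1) + 1 by ring]
  field_simp
  ring

lemma hasDerivAt_besselFTerm_succ (μ t : ℝ) (k : ℕ) :
    HasDerivAt (fun t ↦ besselFTerm μ t (k + 1)) (besselFTerm (μ + 1) t k) t := by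
  refine ((hasDerivAt_pow (k + 1) t).div_const _).congr_deriv ?_
  rw [besselFTerm, Nat.add_sub_cancel, Nat.factorial_succ]
  push_cast
  rw [show (k + 1 : ℝ) + μ + 1 = k + (μ + 1) + 1 by ring]
  field_simp

lemma besselFTerm_sub_one (μ t : ℝ) (k : ℕ) :
    besselFTerm (μ - 1) t k = μ * besselFTerm μ t k + k * besselFTerm μ t k := by
  rw [besselFTerm, besselFTerm, show (k : ℝ) + (μ - 1) + 1 = k + μ by ring,
    ← add_mul, div_eq_mul_inv, mul_inv, inv_Gamma_eq_div_Gamma_add_one]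
  ring

lemma besselF_zero (μ : ℝ) : besselF μ 0 = (Gamma (μ + 1))⁻¹ := by
  rw [besselF, tsum_eq_single 0 fun k hk ↦ by simp [besselFTerm, zero_pow hk],
    besselFTerm_index_zero]

lemma besselF_pos (hμ : -1 ≤ μ) (ht : 0 < t) : 0 < besselF μ t := by
  refine (summable_besselFTerm hμ t).tsum_pos (besselFTerm_nonneg hμ ht.le) 1 ?_
  have : 0 < Gamma ((1 : ℕ) + μ + 1) := Gamma_pos_of_pos (by push_cast; linarith)
  unfold besselFTerm
  positivity

lemma hasSum_besselFTerm_succ (hμ : -1 ≤ μ) (t : ℝ) :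
    HasSum (fun k ↦ besselFTerm μ t (k + 1)) (besselF μ t - (Gamma (μ + 1))⁻¹) := by
  simpa [besselFTerm_index_zero] using (hasSum_nat_add_iff' 1).mpr (hasSum_besselF hμ t)

lemma hasDerivAt_besselF (hμ : -1 ≤ μ) (t : ℝ) :
    HasDerivAt (besselF μ) (besselF (μ + 1) t) t := by
  set R := |t| + 1
  have hball : ∀ y ∈ Ioo (-R) R, |y| ≤ R := fun y hy ↦ (abs_lt.mpr hy).le
  have htR : t ∈ Ioo (-R) R := abs_lt.mp (lt_add_one |t|)
  have hd := hasDerivAt_tsum_of_isPreconnected (summable_besselFTerm (by linarith) R)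
    isOpen_Ioo isPreconnected_Ioo (fun k y _ ↦ hasDerivAt_besselFTerm_succ μ y k)
    (fun k y hy ↦ abs_besselFTerm_le (by linarith) (hball y hy) k) htR
    (hasSum_besselFTerm_succ hμ t).summable htR
  refine (hd.const_add (Gamma (μ + 1))⁻¹).congr_of_eventuallyEq (Eventually.of_forall fun y ↦ ?_)
  simp only [(hasSum_besselFTerm_succ hμ y).tsum_eq]
  ring

lemma continuous_besselF (hμ : -1 ≤ μ) : Continuous (besselF μ) :=
  continuous_iff_continuousAt.mpr fun t ↦ (hasDerivAt_besselF hμ t).continuousAt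

lemma besselF_sub_one (hμ : -1 ≤ μ) (t : ℝ) :
    besselF (μ - 1) t = μ * besselF μ t + t * besselF (μ + 1) t := by
  have hsucc : HasSum (fun k : ℕ ↦ ((k + 1 : ℕ) : ℝ) * besselFTerm μ t (k + 1))
      (t * besselF (μ + 1) t) := by
    simpa only [Nat.cast_succ, succ_mul_besselFTerm_succ] using
      (hasSum_besselF (by linarith) t).mul_left t
  have hshift := hsucc.zero_add (f := fun k : ℕ ↦ (k : ℝ) * besselFTerm μ t k)
  rw [Nat.cast_zero, zero_mul, zero_add] at hshift
  have := ((hasSum_besselF hμ t).mul_left μ).add hshift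
  simp only [← besselFTerm_sub_one] at this
  exact this.tsum_eq

end Series

lemma besselI_eq_besselF (ν : ℝ) {x : ℝ} (hx : 0 < x) :
    besselI ν x = (x / 2) ^ ν * besselF ν (x ^ 2 / 4) := by
  rw [besselI, besselF, ← tsum_mul_left]
  refine tsum_congr fun k ↦ ?_
  rw [rpow_add (by positivity), show 2 * (k : ℝ) = (2 * k : ℕ) by push_cast; ring, rpow_natCast,
    pow_mul, besselFTerm]
  ring

section RatioGap

variable {ν a β q τ : ℝ}

lemma hasDerivAt_sqrt_sq_add_four_mul (hτ : 0 < β ^ 2 + 4 * τ) :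
    HasDerivAt (fun τ ↦ √(β ^ 2 + 4 * τ)) (2 / √(β ^ 2 + 4 * τ)) τ := by
  convert (((hasDerivAt_id' τ).const_mul 4).const_add (β ^ 2)).sqrt hτ.ne' using 1
  ring

lemma lt_sqrt_sq_add_four_mul (hβ : 0 ≤ β) (hτ : 0 < τ) : β < √(β ^ 2 + 4 * τ) :=
  (lt_sqrt hβ).mpr (by linarith)

noncomputable def ratioLowerBound (a β τ : ℝ) : ℝ :=
  (a + √(β ^ 2 + 4 * τ)) / 2

noncomputable def ratioGap (ν a β τ : ℝ) : ℝ :=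
  besselF (ν - 1) τ - ratioLowerBound a β τ * besselF ν τ

noncomputable def integratingFactor (a β τ : ℝ) : ℝ :=
  τ ^ ((a + β) / 2) * exp √(β ^ 2 + 4 * τ) * (√(β ^ 2 + 4 * τ) + β) ^ (-β)

lemma integratingFactor_nonneg (hβ : 0 ≤ β) (hτ : 0 ≤ τ) : 0 ≤ integratingFactor a β τ := by
  unfold integratingFactor
  have := sqrt_nonneg (β ^ 2 + 4 * τ)
  exact mul_nonneg (mul_nonneg (rpow_nonneg hτ _) (exp_pos _).le) (rpow_nonneg (by linarith) _)

lemma integratingFactor_pos (hβ : 0 ≤ β) (hτ : 0 < τ) : 0 < integratingFactor a β τ := by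
  unfold integratingFactor
  have := lt_sqrt_sq_add_four_mul hβ hτ
  exact mul_pos (mul_pos (rpow_pos_of_pos hτ _) (exp_pos _)) (rpow_pos_of_pos (by linarith) _)

lemma hasDerivAt_integratingFactor (hβ : 0 ≤ β) (hτ : 0 < τ) :
    HasDerivAt (integratingFactor a β)
      (ratioLowerBound a β τ / τ * integratingFactor a β τ) τ := by
  have hsβ := lt_sqrt_sq_add_four_mul hβ hτ
  have hs := hasDerivAt_sqrt_sq_add_four_mul (β := β) (τ := τ) (by positivity)
  have hd := (((hasDerivAt_id' τ).rpow_const (p := (a + β) / 2) (Or.inl hτ.ne')).mul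
    ((hasDerivAt_exp _).comp τ hs)).mul
    ((hs.add_const β).rpow_const (p := -β) (Or.inl (by linarith)))
  refine hd.congr_deriv ?_
  have hs2 : √(β ^ 2 + 4 * τ) ^ 2 = β ^ 2 + 4 * τ := sq_sqrt (by positivity)
  simp only [Pi.mul_apply, Function.comp_apply, integratingFactor, ratioLowerBound,
    rpow_sub_one hτ.ne', rpow_sub_one (show √(β ^ 2 + 4 * τ) + β ≠ 0 by linarith)]
  generalize √(β ^ 2 + 4 * τ) = s at hs2 hsβ ⊢
  have : s ≠ 0 := by linarith
  have : s + β ≠ 0 := by linarith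
  field_simp
  linear_combination (-((s + β) ^ (-β) * s)) * hs2

lemma continuousAt_integratingFactor_zero (hβ : 0 ≤ β) (hab : 0 ≤ a + β) :
    ContinuousAt (integratingFactor a β) 0 := by
  have hs : Continuous fun τ : ℝ ↦ √(β ^ 2 + 4 * τ) := by fun_prop
  refine ((continuousAt_id.rpow_const (Or.inr (by linarith))).mul
    (continuous_exp.comp hs).continuousAt).mul
    ((hs.continuousAt.add continuousAt_const).rpow_const ?_)
  rcases hβ.eq_or_lt with rfl | hβ
  · exact Or.inr (by norm_num)
  · exact Or.inl (by simp only [Pi.add_apply]; positivity)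

lemma continuous_ratioGap (hν : 0 ≤ ν) : Continuous (ratioGap ν a β) := by
  unfold ratioGap ratioLowerBound
  have := continuous_besselF (μ := ν - 1) (by linarith)
  have := continuous_besselF (μ := ν) (by linarith)
  fun_prop

lemma ratioGap_zero (hβ : 0 ≤ β) :
    ratioGap ν a β 0 = (2 * ν - a - β) / (2 * Gamma (ν + 1)) := by
  rw [ratioGap, ratioLowerBound, besselF_zero, besselF_zero, sub_add_cancel,
    inv_Gamma_eq_div_Gamma_add_one, mul_zero, add_zero, sqrt_sq hβ]
  ring

lemma hasDerivAt_ratioGap (hν : 0 ≤ ν) (hβ : 0 ≤ β) (h₁ : a * (2 * ν - a) = β ^ 2 - 2 * q * β)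
    (h₂ : 2 * (ν - a) - 1 = q ^ 2) (hτ : 0 < τ) :
    HasDerivAt (ratioGap ν a β)
      (besselF ν τ * (q * √(β ^ 2 + 4 * τ) - β) ^ 2 / (4 * τ * √(β ^ 2 + 4 * τ))
        - ratioLowerBound a β τ / τ * ratioGap ν a β τ) τ := by
  have hsβ := lt_sqrt_sq_add_four_mul hβ hτ
  have hs := hasDerivAt_sqrt_sq_add_four_mul (β := β) (τ := τ) (by positivity)
  have hd := (hasDerivAt_besselF (μ := ν - 1) (by linarith) τ).sub
    (((hs.const_add a).div_const 2).mul (hasDerivAt_besselF (μ := ν) (by linarith) τ))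
  rw [sub_add_cancel] at hd
  refine hd.congr_deriv ?_
  have hs2 : √(β ^ 2 + 4 * τ) ^ 2 = β ^ 2 + 4 * τ := sq_sqrt (by positivity)
  have hrec := besselF_sub_one (μ := ν) (by linarith) τ
  simp only [ratioGap, ratioLowerBound]
  generalize √(β ^ 2 + 4 * τ) = s at hs2 hsβ ⊢
  have : s ≠ 0 := by linarith
  field_simp
  linear_combination 8 * s * (a + s) * hrec + 4 * s * besselF ν τ * h₁
    + 4 * s ^ 2 * besselF ν τ * h₂
    + 4 * (1 - s) * besselF ν τ * hs2

lemma hasDerivAt_ratioGap_mul_integratingFactor (hν : 0 ≤ ν) (hβ : 0 ≤ β)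
    (h₁ : a * (2 * ν - a) = β ^ 2 - 2 * q * β) (h₂ : 2 * (ν - a) - 1 = q ^ 2) (hτ : 0 < τ) :
    HasDerivAt (fun τ ↦ ratioGap ν a β τ * integratingFactor a β τ)
      (besselF ν τ * integratingFactor a β τ * (q * √(β ^ 2 + 4 * τ) - β) ^ 2
        / (4 * τ * √(β ^ 2 + 4 * τ))) τ := by
  refine ((hasDerivAt_ratioGap hν hβ h₁ h₂ hτ).mul
    (hasDerivAt_integratingFactor hβ hτ)).congr_deriv ?_
  ring

lemma monotoneOn_ratioGap_mul_integratingFactor (hν : 0 ≤ ν) (hβ : 0 ≤ β)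
    (h₁ : a * (2 * ν - a) = β ^ 2 - 2 * q * β) (h₂ : 2 * (ν - a) - 1 = q ^ 2) :
    MonotoneOn (fun τ ↦ ratioGap ν a β τ * integratingFactor a β τ) (Ioi 0) := by
  have hd := fun τ (hτ : τ ∈ Ioi (0 : ℝ)) ↦
    hasDerivAt_ratioGap_mul_integratingFactor hν hβ h₁ h₂ hτ
  refine monotoneOn_of_deriv_nonneg (convex_Ioi 0)
    (fun τ hτ ↦ (hd τ hτ).continuousAt.continuousWithinAt)
    (fun τ hτ ↦ (hd τ (interior_subset hτ)).differentiableAt.differentiableWithinAt) ?_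
  rintro τ hτ
  rw [interior_Ioi] at hτ
  have hsβ := lt_sqrt_sq_add_four_mul hβ hτ
  rw [(hd τ hτ).deriv]
  have := besselF_pos (μ := ν) (by linarith) hτ
  have := integratingFactor_pos (a := a) hβ hτ
  have : (0 : ℝ) < τ := hτ
  positivity

lemma strictMonoOn_ratioGap_mul_integratingFactor (hν : 0 ≤ ν) (hβ : 0 ≤ β) (hab : 0 ≤ a + β)
    (hq : 1 ≤ q) (h₁ : a * (2 * ν - a) = β ^ 2 - 2 * q * β) (h₂ : 2 * (ν - a) - 1 = q ^ 2) :
    StrictMonoOn (fun τ ↦ ratioGap ν a β τ * integratingFactor a β τ) (Ici 0) := by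
  have hd := fun τ (hτ : τ ∈ Ioi (0 : ℝ)) ↦
    hasDerivAt_ratioGap_mul_integratingFactor hν hβ h₁ h₂ hτ
  refine strictMonoOn_of_deriv_pos (convex_Ici 0) (fun τ hτ ↦ ?_) ?_
  · rcases (mem_Ici.mp hτ).eq_or_lt with rfl | hτ
    · exact ((continuous_ratioGap hν).continuousAt.mul
        (continuousAt_integratingFactor_zero hβ hab)).continuousWithinAt
    · exact (hd τ hτ).continuousAt.continuousWithinAt
  rintro τ hτ
  rw [interior_Ici] at hτ
  have hsβ := lt_sqrt_sq_add_four_mul hβ hτ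
  have : 0 < q * √(β ^ 2 + 4 * τ) - β := by nlinarith
  rw [(hd τ hτ).deriv]
  have := besselF_pos (μ := ν) (by linarith) hτ
  have := integratingFactor_pos (a := a) hβ hτ
  have : (0 : ℝ) < τ := hτ
  positivity

lemma ratioGap_pos_of_lt (hν : 0 ≤ ν) (hβ : 0 ≤ β) (h0 : a + β < 2 * ν)
    (h₁ : a * (2 * ν - a) = β ^ 2 - 2 * q * β) (h₂ : 2 * (ν - a) - 1 = q ^ 2) {t : ℝ}
    (ht : 0 < t) : 0 < ratioGap ν a β t := by
  have hgap0 : 0 < ratioGap ν a β 0 := by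
    rw [ratioGap_zero hβ]
    exact div_pos (by linarith) (mul_pos two_pos (Gamma_pos_of_pos (by linarith)))
  have hnear : ∀ᶠ τ in 𝓝[>] 0, 0 < ratioGap ν a β τ :=
    nhdsWithin_le_nhds (((continuous_ratioGap hν).tendsto 0).eventually (lt_mem_nhds hgap0))
  obtain ⟨τ, hτ, hgapτ⟩ := ((eventually_mem_set.mpr (Ioc_mem_nhdsGT ht)).and hnear).exists
  have hmono := monotoneOn_ratioGap_mul_integratingFactor hν hβ h₁ h₂ hτ.1 ht hτ.2
  exact pos_of_mul_pos_left ((mul_pos hgapτ (integratingFactor_pos hβ hτ.1)).trans_le hmono)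
    (integratingFactor_nonneg hβ ht.le)

lemma ratioGap_pos_of_one_le (hν : 0 ≤ ν) (hβ : 0 ≤ β) (hab : 0 ≤ a + β) (h0 : a + β ≤ 2 * ν)
    (hq : 1 ≤ q) (h₁ : a * (2 * ν - a) = β ^ 2 - 2 * q * β) (h₂ : 2 * (ν - a) - 1 = q ^ 2)
    {t : ℝ} (ht : 0 < t) : 0 < ratioGap ν a β t := by
  have hgap0 : 0 ≤ ratioGap ν a β 0 := by
    rw [ratioGap_zero hβ]
    exact div_nonneg (by linarith) (mul_nonneg zero_le_two (Gamma_nonneg_of_nonneg (by linarith)))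
  have hmono := strictMonoOn_ratioGap_mul_integratingFactor hν hβ hab hq h₁ h₂
    self_mem_Ici ht.le ht
  exact pos_of_mul_pos_left
    ((mul_nonneg hgap0 (integratingFactor_nonneg hβ le_rfl)).trans_lt hmono)
    (integratingFactor_nonneg hβ ht.le)

end RatioGap

lemma ratioLowerBound_mul_besselF_lt {lam ν t : ℝ} (hlam : lam ∈ Icc (0 : ℝ) (1 / 2))
    (hν : 1 / 2 - lam ≤ ν) (ht : 0 < t) :
    ratioLowerBound (ν - 1 / 2 - lam) (√(2 * lam) + √(ν ^ 2 - (lam - 1 / 2) ^ 2)) t * besselF ν t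
      < besselF (ν - 1) t := by
  obtain ⟨hlam₀, hlam₁⟩ := hlam
  have hν₀ : 0 ≤ ν := by linarith
  set q := √(2 * lam)
  set γ := √(ν ^ 2 - (lam - 1 / 2) ^ 2)
  have hq₀ : 0 ≤ q := sqrt_nonneg _
  have hγ₀ : 0 ≤ γ := sqrt_nonneg _
  have hq : q ^ 2 = 2 * lam := sq_sqrt (by linarith)
  have hγ : γ ^ 2 = ν ^ 2 - (lam - 1 / 2) ^ 2 := sq_sqrt (by nlinarith)
  have hq₁ : q ≤ 1 := sqrt_le_one.mpr (by linarith)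
  have hγν : γ ≤ ν := (sqrt_le_left hν₀).mpr (by linarith [sq_nonneg (lam - 1 / 2)])
  have h₁ : (ν - 1 / 2 - lam) * (2 * ν - (ν - 1 / 2 - lam)) = (q + γ) ^ 2 - 2 * q * (q + γ) := by
    linear_combination hq - hγ
  have h₂ : 2 * (ν - (ν - 1 / 2 - lam)) - 1 = q ^ 2 := by linear_combination -hq
  have hsum : ν - 1 / 2 - lam + (q + γ) = (ν - (1 / 2 - lam)) + q * (1 - q) + γ := by
    linear_combination hq
  have hdiff : 2 * ν - (ν - 1 / 2 - lam + (q + γ)) = (ν - γ) + (1 - q) ^ 2 / 2 := by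
    linear_combination -hq / 2
  have hab : 0 ≤ ν - 1 / 2 - lam + (q + γ) := by linarith [mul_nonneg hq₀ (sub_nonneg.2 hq₁)]
  rw [← sub_pos]
  rcases lt_or_ge q 1 with hq_lt | hq_ge
  · exact ratioGap_pos_of_lt hν₀ (by positivity) (by linarith [pow_pos (sub_pos.2 hq_lt) 2])
      h₁ h₂ ht
  · exact ratioGap_pos_of_one_le hν₀ (by positivity) hab (by linarith [sq_nonneg (1 - q)]) hq_ge
      h₁ h₂ ht

lemma besselI_sub_one_div_besselI (ν : ℝ) {x : ℝ} (hx : 0 < x) :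
    besselI (ν - 1) x / besselI ν x
      = 2 * besselF (ν - 1) (x ^ 2 / 4) / (x * besselF ν (x ^ 2 / 4)) := by
  rw [besselI_eq_besselF _ hx, besselI_eq_besselF _ hx, rpow_sub_one (by positivity)]
  have : (x / 2) ^ ν ≠ 0 := by positivity
  field_simp

theorem besselI_ratio_close_to_best_lower (lam ν x : ℝ)
    (hlam : lam ∈ Set.Icc (0 : ℝ) (1 / 2)) (hν : 1 / 2 - lam ≤ ν) (hx : 0 < x) :
    besselI (ν - 1) x / besselI ν x >
      (ν - 1 / 2 - lam +
          Real.sqrt ((Real.sqrt (2 * lam) + Real.sqrt (ν ^ 2 - (lam - 1 / 2) ^ 2)) ^ 2 + x ^ 2)) /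
        x := by
  have ht : 0 < x ^ 2 / 4 := by positivity
  have hF : 0 < besselF ν (x ^ 2 / 4) := besselF_pos (by linarith [hlam.2]) ht
  have key := ratioLowerBound_mul_besselF_lt hlam hν ht
  rw [ratioLowerBound, show 4 * (x ^ 2 / 4) = x ^ 2 by ring] at key
  rw [besselI_sub_one_div_besselI ν hx, gt_iff_lt, div_lt_div_iff₀ hx (by positivity)]
  linarith [mul_lt_mul_of_pos_left key (by positivity : (0 : ℝ) < 2 * x)]
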